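/- Let y(s) = 9s(2s³−3s+4)/(4(s+1)(s−1)²(2s²+6s+1)) and t(s) = 27s²/(4(s²−1)³). Then on any open set of real s where the denominators and dt/ds are nonzero, the function Y defined locally by Y(t(s)) = y(s) satisfies the sixth Painlevé equation with parameters α = 1/18, β = −1/8, γ = 1/32, δ = 3/8. -/

import Mathlib

/-!
Both `y` and `t` are rational functions of `s`, so `dy/dt = y'(s) / t'(s)` is again rational
and reduces to `slopeNum / slopeDen`. Derivatives of quotients of polynomials are quotients of
polynomials, so after clearing denominators the Painlevé VI equation becomes a polynomial
identity in `s`.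
-/

open Polynomial Filter Topology

noncomputable section

def painleveVIRhs (α β γ δ t y y' : ℝ) : ℝ :=
  1 / 2 * (1 / y + 1 / (y - 1) + 1 / (y - t)) * y' ^ 2
    - (1 / t + 1 / (t - 1) + 1 / (y - t)) * y'
    + y * (y - 1) * (y - t) / (t ^ 2 * (t - 1) ^ 2) *
      (α + β * t / y ^ 2 + γ * (t - 1) / (y - 1) ^ 2 + δ * t * (t - 1) / (y - t) ^ 2)

namespace Polynomial

variable {𝕜 : Type*} [NontriviallyNormedField 𝕜]

theorem hasDerivAt_eval_div_eval (p q : 𝕜[X]) {x : 𝕜} (hq : q.eval x ≠ 0) :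
    HasDerivAt (fun x => p.eval x / q.eval x)
      ((derivative p * q - p * derivative q).eval x / q.eval x ^ 2) x := by
  rw [eval_sub, eval_mul, eval_mul]
  exact (p.hasDerivAt x).div (q.hasDerivAt x) hq

theorem deriv_eval_div_eval_div_deriv (p q r u : 𝕜[X]) {x : 𝕜} (hq : q.eval x ≠ 0)
    (hu : u.eval x ≠ 0) :
    deriv (fun x => p.eval x / q.eval x) x / deriv (fun x => r.eval x / u.eval x) x =
      ((derivative p * q - p * derivative q) * u ^ 2).eval x /
        ((derivative r * u - r * derivative u) * q ^ 2).eval x := by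
  rw [(hasDerivAt_eval_div_eval p q hq).deriv, (hasDerivAt_eval_div_eval r u hu).deriv,
    div_div_div_eq, eval_mul, eval_mul, eval_pow, eval_pow, mul_comm (q.eval x ^ 2)]

end Polynomial

namespace PVIOctahedral7

def y (s : ℝ) : ℝ :=
  9 * s * (2 * s ^ 3 - 3 * s + 4) / (4 * (s + 1) * (s - 1) ^ 2 * (2 * s ^ 2 + 6 * s + 1))

def t (s : ℝ) : ℝ := 27 * s ^ 2 / (4 * (s ^ 2 - 1) ^ 3)

def yNum : ℝ[X] := 9 * X * (2 * X ^ 3 - 3 * X + 4)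
def yDen : ℝ[X] := 4 * (X + 1) * (X - 1) ^ 2 * (2 * X ^ 2 + 6 * X + 1)
def tNum : ℝ[X] := 27 * X ^ 2
def tDen : ℝ[X] := 4 * (X ^ 2 - 1) ^ 3

/-- `slopeNum / slopeDen` is `y'(s) / t'(s) = dy/dt` in lowest terms. -/
def slopeNum : ℝ[X] :=
  (X - 1) * (X + 1) ^ 2 * (4 * X ^ 7 + 4 * X ^ 6 + 28 * X ^ 4 + 67 * X ^ 3 + 3 * X ^ 2 - 2 * X + 4)
def slopeDen : ℝ[X] := 6 * X * (2 * X ^ 2 + 1) * (2 * X ^ 2 + 6 * X + 1) ^ 2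

theorem y_eq : y = fun x => yNum.eval x / yDen.eval x := by
  funext x; simp [y, yNum, yDen]

theorem t_eq : t = fun x => tNum.eval x / tDen.eval x := by
  funext x; simp [t, tNum, tDen]

variable {x : ℝ}

theorem eval_yDen_ne_zero (hx : (x + 1) * (x - 1) * (2 * x ^ 2 + 6 * x + 1) ≠ 0) :
    yDen.eval x ≠ 0 := by
  simp only [mul_ne_zero_iff] at hx
  simp [yDen, hx]

theorem eval_tDen_ne_zero (hx : (x + 1) * (x - 1) * (2 * x ^ 2 + 6 * x + 1) ≠ 0) :
    tDen.eval x ≠ 0 := by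
  simp only [mul_ne_zero_iff] at hx
  have : tDen.eval x = 4 * ((x + 1) * (x - 1)) ^ 3 := by simp [tDen]; ring
  simp [this, hx]

theorem eval_slopeDen_ne_zero (h0 : x ≠ 0)
    (hx : (x + 1) * (x - 1) * (2 * x ^ 2 + 6 * x + 1) ≠ 0) :
    slopeDen.eval x ≠ 0 := by
  simp only [mul_ne_zero_iff] at hx
  simp [slopeDen, hx, h0]
  positivity

theorem eval_tDerivNum_ne_zero (h0 : x ≠ 0)
    (hx : (x + 1) * (x - 1) * (2 * x ^ 2 + 6 * x + 1) ≠ 0) :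
    (derivative tNum * tDen - tNum * derivative tDen).eval x ≠ 0 := by
  simp only [mul_ne_zero_iff] at hx
  have : (derivative tNum * tDen - tNum * derivative tDen).eval x
      = -216 * x * ((x + 1) * (x - 1)) ^ 2 * (2 * x ^ 2 + 1) := by
    simp [tNum, tDen, derivative_pow]; ring
  rw [this]
  have : 2 * x ^ 2 + 1 ≠ 0 := by positivity
  simp [hx, h0, this]

theorem deriv_y_div_deriv_t (h0 : x ≠ 0)
    (hx : (x + 1) * (x - 1) * (2 * x ^ 2 + 6 * x + 1) ≠ 0) :
    deriv y x / deriv t x = slopeNum.eval x / slopeDen.eval x := by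
  rw [y_eq, t_eq,
    deriv_eval_div_eval_div_deriv _ _ _ _ (eval_yDen_ne_zero hx) (eval_tDen_ne_zero hx),
    div_eq_div_iff _ (eval_slopeDen_ne_zero h0 hx)]
  · simp [yNum, yDen, tNum, tDen, slopeNum, slopeDen, derivative_pow]; ring
  · rw [eval_mul, eval_pow]
    exact mul_ne_zero (eval_tDerivNum_ne_zero h0 hx) (pow_ne_zero 2 (eval_yDen_ne_zero hx))

theorem hasDerivAt_t (hx : (x + 1) * (x - 1) * (2 * x ^ 2 + 6 * x + 1) ≠ 0) :
    HasDerivAt t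
      ((derivative tNum * tDen - tNum * derivative tDen).eval x / tDen.eval x ^ 2) x := by
  rw [t_eq]
  exact hasDerivAt_eval_div_eval _ _ (eval_tDen_ne_zero hx)

theorem deriv_t_zero : deriv t 0 = 0 := by
  rw [(hasDerivAt_t (by norm_num)).deriv]
  simp [tNum]

theorem deriv_y_div_deriv_t_eventuallyEq (h0 : x ≠ 0)
    (hx : (x + 1) * (x - 1) * (2 * x ^ 2 + 6 * x + 1) ≠ 0) :
    (fun x => deriv y x / deriv t x) =ᶠ[𝓝 x] fun x => slopeNum.eval x / slopeDen.eval x := by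
  have hcont : Continuous fun x : ℝ => (x + 1) * (x - 1) * (2 * x ^ 2 + 6 * x + 1) := by fun_prop
  filter_upwards [eventually_ne_nhds h0, hcont.continuousAt.eventually_ne hx] with x h0 hx
  exact deriv_y_div_deriv_t h0 hx

set_option maxRecDepth 10000 in
theorem slope_deriv_div_t_deriv_eq_painleveVIRhs (h0 : x ≠ 0)
    (hx : (x + 1) * (x - 1) * (2 * x ^ 2 + 6 * x + 1) ≠ 0)
    (ht0 : t x ≠ 0) (ht1 : t x ≠ 1) (hy0 : y x ≠ 0) (hy1 : y x ≠ 1) (hyt : y x ≠ t x) :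
    (derivative slopeNum * slopeDen - slopeNum * derivative slopeDen).eval x /
          slopeDen.eval x ^ 2 /
        ((derivative tNum * tDen - tNum * derivative tDen).eval x / tDen.eval x ^ 2) =
      painleveVIRhs (1 / 18) (-1 / 8) (1 / 32) (3 / 8) (t x) (y x)
        (slopeNum.eval x / slopeDen.eval x) := by
  have hS := eval_slopeDen_ne_zero h0 hx
  have hT := eval_tDerivNum_ne_zero h0 hx
  have hE := eval_tDen_ne_zero hx
  have hB := eval_yDen_ne_zero hx
  have ht1' := sub_ne_zero.mpr ht1
  have hy1' := sub_ne_zero.mpr hy1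
  have hyt' := sub_ne_zero.mpr hyt
  unfold painleveVIRhs
  -- Clear the denominators in `y` and `t` as atoms first: that is where `y ≠ 0, 1, t` and
  -- `t ≠ 0, 1` are needed; afterwards only the denominators of the parametrisation remain.
  field_simp
  simp only [y_eq, t_eq]
  field_simp
  simp only [yNum, yDen, slopeNum, slopeDen, tNum, tDen, derivative_pow, derivative_mul,
    derivative_add, derivative_sub, derivative_X, derivative_ofNat, derivative_one, eval_mul,
    eval_add, eval_sub, eval_pow, eval_X, eval_ofNat, eval_one, eval_zero, eval_C, Nat.cast_ofNat]
  ring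

end PVIOctahedral7

open PVIOctahedral7

/-- Octahedral solution 7 (6 branches): y(s) = 9s(2s³−3s+4)/(4(s+1)(s−1)²(2s²+6s+1)), t(s) = 27s²/(4(s²−1)³) solves Painlevé VI with α = 1/18, β = −1/8, γ = 1/32, δ = 3/8 (θ = (1/2,1/2,1/4,2/3)). -/
theorem parametric_PVI_solution_14 :
    let y : ℝ → ℝ := fun s => 9 * s * (2 * s ^ 3 - 3 * s + 4) / (4 * (s + 1) * (s - 1) ^ 2 * (2 * s ^ 2 + 6 * s + 1))
    let t : ℝ → ℝ := fun s => 27 * s ^ 2 / (4 * (s ^ 2 - 1) ^ 3)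
    let Y₁ : ℝ → ℝ := fun s => deriv y s / deriv t s
    let Y₂ : ℝ → ℝ := fun s => deriv Y₁ s / deriv t s
    ∀ s : ℝ, (s + 1) * (s - 1) * (2 * s ^ 2 + 6 * s + 1) ≠ 0 → deriv t s ≠ 0 →
      t s ≠ 0 → t s ≠ 1 → y s ≠ 0 → y s ≠ 1 → y s ≠ t s →
      Y₂ s =
        (1 / 2) * (1 / y s + 1 / (y s - 1) + 1 / (y s - t s)) * (Y₁ s) ^ 2
          - (1 / t s + 1 / (t s - 1) + 1 / (y s - t s)) * Y₁ s
          + y s * (y s - 1) * (y s - t s) / ((t s) ^ 2 * (t s - 1) ^ 2) *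
            ((1 / 18) + (-1 / 8) * t s / (y s) ^ 2 + (1 / 32) * (t s - 1) / (y s - 1) ^ 2
              + (3 / 8) * t s * (t s - 1) / (y s - t s) ^ 2) := by
  intro y t Y₁ Y₂ s hd hdt ht0 ht1 hy0 hy1 hyt
  have hs : s ≠ 0 := by
    rintro rfl
    exact hdt deriv_t_zero
  have hY₁ : Y₁ =ᶠ[𝓝 s] fun x => slopeNum.eval x / slopeDen.eval x :=
    deriv_y_div_deriv_t_eventuallyEq hs hd
  have hY₂ : Y₂ s = deriv (fun x => slopeNum.eval x / slopeDen.eval x) s / deriv t s := by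
    rw [← hY₁.deriv_eq]
  have ht' : deriv t s = _ := (hasDerivAt_t hd).deriv
  rw [hY₂, hY₁.eq_of_nhds, ht',
    (hasDerivAt_eval_div_eval _ _ (eval_slopeDen_ne_zero hs hd)).deriv]
  exact slope_deriv_div_t_deriv_eq_painleveVIRhs hs hd ht0 ht1 hy0 hy1 hyt
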